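/- Assume ν = (ν₁,ν₂) lies in the W(B₂)-orbit of (2,1). The homogeneous linear system in unknowns (x, y, z) ∈ ℂ³: 12(ν₁−1)x + 2(ν₂+2)y = 0; 2(ν₁−3)y + 12ν₂·z = 0; 12(ν₂−2)x + 2(ν₁−5)y = 0; 2ν₂·y + 12(ν₁−3)z = 0; 4(ν₂−2)x − 2(ν₁−1)y = 0; 2ν₂·y − 4(ν₁+1)z = 0, has a nonzero solution if and only if ν ∈ {(2,1), (2,−1), (1,2)}. Moreover, the solution set is ℂ·(3, −6, −1) when ν = (2,1), it is ℂ·(1, −6, 1) when ν = (2,−1), and it is ℂ·(1, 0, 0) when ν = (1,2). -/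
import Mathlib


/-- The linear system of Lemma on the embedding of `X(γ₀)` (`σ = σ_{1,1}`). -/
def sys11 (ν₁ ν₂ x y z : ℂ) : Prop :=
  12 * (ν₁ - 1) * x + 2 * (ν₂ + 2) * y = 0 ∧
  2 * (ν₁ - 3) * y + 12 * ν₂ * z = 0 ∧
  12 * (ν₂ - 2) * x + 2 * (ν₁ - 5) * y = 0 ∧
  2 * ν₂ * y + 12 * (ν₁ - 3) * z = 0 ∧
  4 * (ν₂ - 2) * x - 2 * (ν₁ - 1) * y = 0 ∧
  2 * ν₂ * y - 4 * (ν₁ + 1) * z = 0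

lemma sys11_21 (x y z : ℂ) :
    sys11 2 1 x y z ↔ ∃ α : ℂ, x = 3 * α ∧ y = -6 * α ∧ z = -α := by
  constructor
  · rintro ⟨h1, h2, h3, h4, h5, h6⟩
    exact ⟨-z, by linear_combination (-1/4) * h5 + (1/4) * h2,
      by linear_combination (-1/2) * h2, by ring⟩
  · rintro ⟨α, rfl, rfl, rfl⟩
    exact ⟨by ring, by ring, by ring, by ring, by ring, by ring⟩

lemma sys11_2m1 (x y z : ℂ) :
    sys11 2 (-1) x y z ↔ ∃ α : ℂ, x = α ∧ y = -6 * α ∧ z = α := by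
  constructor
  · rintro ⟨h1, h2, h3, h4, h5, h6⟩
    exact ⟨z, by linear_combination (1/12) * h1 + (1/12) * h2,
      by linear_combination (-1/2) * h2, rfl⟩
  · rintro ⟨α, rfl, rfl, rfl⟩
    exact ⟨by ring, by ring, by ring, by ring, by ring, by ring⟩

lemma sys11_12 (x y z : ℂ) :
    sys11 1 2 x y z ↔ ∃ α : ℂ, x = α ∧ y = 0 ∧ z = 0 := by
  constructor
  · rintro ⟨h1, h2, h3, h4, h5, h6⟩
    exact ⟨x, rfl, by linear_combination (1/8) * h1,
      by linear_combination (1/24) * h2 + (1/48) * h1⟩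
  · rintro ⟨α, rfl, rfl, rfl⟩
    exact ⟨by ring, by ring, by ring, by ring, by ring, by ring⟩

lemma sys11_m21 (x y z : ℂ) (hs : sys11 (-2) 1 x y z) : x = 0 ∧ y = 0 ∧ z = 0 := by
  obtain ⟨h1, h2, h3, h4, h5, h6⟩ := hs
  have hx : x = 0 := by linear_combination (-7/288) * h1 + (-1/96) * h3
  have hy : y = 0 := by linear_combination (1/6) * h1 + 6 * hx
  have hz : z = 0 := by linear_combination (1/12) * h2 + (5/6) * hy
  exact ⟨hx, hy, hz⟩

lemma sys11_m2m1 (x y z : ℂ) (hs : sys11 (-2) (-1) x y z) : x = 0 ∧ y = 0 ∧ z = 0 := by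
  obtain ⟨h1, h2, h3, h4, h5, h6⟩ := hs
  have hy : y = 0 := by linear_combination (1/16) * h1 + (-1/16) * h3
  have hx : x = 0 := by linear_combination (-1/36) * h1 + (1/18) * hy
  have hz : z = 0 := by linear_combination (-1/12) * h2 + (-5/6) * hy
  exact ⟨hx, hy, hz⟩

lemma sys11_1m2 (x y z : ℂ) (hs : sys11 1 (-2) x y z) : x = 0 ∧ y = 0 ∧ z = 0 := by
  obtain ⟨h1, h2, h3, h4, h5, h6⟩ := hs
  have hx : x = 0 := by linear_combination (-1/16) * h5
  have hy : y = 0 := by linear_combination (-1/8) * h3 + (-6) * hx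
  have hz : z = 0 := by linear_combination (-1/24) * h2 + (-1/6) * hy
  exact ⟨hx, hy, hz⟩

lemma sys11_m12 (x y z : ℂ) (hs : sys11 (-1) 2 x y z) : x = 0 ∧ y = 0 ∧ z = 0 := by
  obtain ⟨h1, h2, h3, h4, h5, h6⟩ := hs
  have hy : y = 0 := by linear_combination (-1/12) * h3
  have hx : x = 0 := by linear_combination (-1/24) * h1 + (1/3) * hy
  have hz : z = 0 := by linear_combination (1/24) * h2 + (1/3) * hy
  exact ⟨hx, hy, hz⟩

lemma sys11_m1m2 (x y z : ℂ) (hs : sys11 (-1) (-2) x y z) : x = 0 ∧ y = 0 ∧ z = 0 := by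
  obtain ⟨h1, h2, h3, h4, h5, h6⟩ := hs
  have hx : x = 0 := by linear_combination (-1/24) * h1
  have hy : y = 0 := by linear_combination (-1/12) * h3 + (-4) * hx
  have hz : z = 0 := by linear_combination (-1/24) * h2 + (-1/3) * hy
  exact ⟨hx, hy, hz⟩

/-- For `ν` in the `W(B₂)`-orbit of `(2,1)`, the system has a nonzero solution iff
`ν ∈ {(2,1), (2,−1), (1,2)}`; the solution set is `ℂ·(3,−6,−1)` for `ν = (2,1)`,
`ℂ·(1,−6,1)` for `ν = (2,−1)`, and `ℂ·(1,0,0)` for `ν = (1,2)`. -/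
theorem sys11_nonzero_solution_iff (ν₁ ν₂ : ℂ)
    (h : (ν₁ = 2 ∧ ν₂ = 1) ∨ (ν₁ = 2 ∧ ν₂ = -1) ∨ (ν₁ = -2 ∧ ν₂ = 1) ∨ (ν₁ = -2 ∧ ν₂ = -1) ∨
         (ν₁ = 1 ∧ ν₂ = 2) ∨ (ν₁ = 1 ∧ ν₂ = -2) ∨ (ν₁ = -1 ∧ ν₂ = 2) ∨ (ν₁ = -1 ∧ ν₂ = -2)) :
    ((∃ x y z : ℂ, ¬(x = 0 ∧ y = 0 ∧ z = 0) ∧ sys11 ν₁ ν₂ x y z) ↔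
      ((ν₁ = 2 ∧ ν₂ = 1) ∨ (ν₁ = 2 ∧ ν₂ = -1) ∨ (ν₁ = 1 ∧ ν₂ = 2))) ∧
    (ν₁ = 2 → ν₂ = 1 → ∀ x y z : ℂ,
      sys11 ν₁ ν₂ x y z ↔ ∃ α : ℂ, x = 3 * α ∧ y = -6 * α ∧ z = -α) ∧
    (ν₁ = 2 → ν₂ = -1 → ∀ x y z : ℂ,
      sys11 ν₁ ν₂ x y z ↔ ∃ α : ℂ, x = α ∧ y = -6 * α ∧ z = α) ∧
    (ν₁ = 1 → ν₂ = 2 → ∀ x y z : ℂ,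
      sys11 ν₁ ν₂ x y z ↔ ∃ α : ℂ, x = α ∧ y = 0 ∧ z = 0) := by
  refine ⟨?_, ?_, ?_, ?_⟩
  · constructor
    · rintro ⟨x, y, z, hnz, hs⟩
      rcases h with ⟨rfl, rfl⟩ | ⟨rfl, rfl⟩ | ⟨rfl, rfl⟩ | ⟨rfl, rfl⟩ |
        ⟨rfl, rfl⟩ | ⟨rfl, rfl⟩ | ⟨rfl, rfl⟩ | ⟨rfl, rfl⟩
      · exact Or.inl ⟨rfl, rfl⟩
      · exact Or.inr (Or.inl ⟨rfl, rfl⟩)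
      · exact absurd (sys11_m21 x y z hs) hnz
      · exact absurd (sys11_m2m1 x y z hs) hnz
      · exact Or.inr (Or.inr ⟨rfl, rfl⟩)
      · exact absurd (sys11_1m2 x y z hs) hnz
      · exact absurd (sys11_m12 x y z hs) hnz
      · exact absurd (sys11_m1m2 x y z hs) hnz
    · rintro (⟨rfl, rfl⟩ | ⟨rfl, rfl⟩ | ⟨rfl, rfl⟩)
      · exact ⟨3, -6, -1, by norm_num, (sys11_21 3 (-6) (-1)).2 ⟨1, by ring, by ring, by ring⟩⟩
      · exact ⟨1, -6, 1, by norm_num, (sys11_2m1 1 (-6) 1).2 ⟨1, by ring, by ring, by ring⟩⟩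
      · exact ⟨1, 0, 0, by norm_num, (sys11_12 1 0 0).2 ⟨1, by ring, by ring, by ring⟩⟩
  · rintro rfl rfl; exact sys11_21
  · rintro rfl rfl; exact sys11_2m1
  · rintro rfl rfl; exact sys11_12
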